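/- arXiv:2605.04183 — 3 statements merged into one kernel-verified Lean document; each statement's English description precedes it below -/
import Mathlib

section
/- Let W ∈ ℝ^{d×n} be a matrix of full row rank d such that every nonsingular d×d submatrix B of W satisfies 1 ≤ |det(B)| ≤ Δ. Let w_1,…,w_{d−1} be linearly independent columns of W, and let u be a unit vector with uᵀw_i = 0 for all i ≤ d−1. Then there exist α, β > 0 with β/α ≤ Δ such that for every column w of W, |uᵀw| ∈ {0} ∪ [α, β]. -/
open Matrix

theorem stmt0 (d n : ℕ) (Δ : ℝ) (W : Matrix (Fin d) (Fin n) ℝ)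
    (hrank : W.rank = d)
    (hmod : ∀ g : Fin d → Fin n, Function.Injective g →
      (W.submatrix id g).det ≠ 0 →
      1 ≤ |(W.submatrix id g).det| ∧ |(W.submatrix id g).det| ≤ Δ)
    (c : Fin (d - 1) → Fin n) (hc : Function.Injective c)
    (hli : LinearIndependent ℝ (fun i : Fin (d - 1) => fun j => W j (c i)))
    (u : Fin d → ℝ) (hu : ∑ j, u j ^ 2 = 1)
    (horth : ∀ i : Fin (d - 1), ∑ j, u j * W j (c i) = 0) :
    ∃ α β : ℝ, 0 < α ∧ 0 < β ∧ β / α ≤ Δ ∧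
      ∀ i : Fin n, (∑ j, u j * W j i) = 0 ∨
        (α ≤ |∑ j, u j * W j i| ∧ |∑ j, u j * W j i| ≤ β) := by
  classical
  obtain ⟨m, rfl⟩ : ∃ m, d = m + 1 := by
    rcases d with _ | d
    · simp at hu
    · exact ⟨d, rfl⟩
  set t : Fin n → ℝ := fun k => ∑ j, u j * W j k with ht
  have hu0 : u ≠ 0 := by
    intro h
    rw [h] at hu
    simp at hu
  -- rows of W are linearly independent
  have hrows : LinearIndependent ℝ (fun i => W i) := by
    rw [linearIndependent_iff_card_eq_finrank_span]
    rw [Matrix.rank_eq_finrank_span_row] at hrank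
    simp [Set.finrank]; exact hrank.symm
  -- some column has nonzero inner product with u
  have hex : ∃ k, t k ≠ 0 := by
    by_contra h
    push_neg at h
    apply hu0
    refine Fintype.linearIndependent_iff.mp hrows u ?_ |> funext
    funext k
    simpa [Finset.sum_apply, ht] using h k
  -- the family of square matrices
  set M : (Fin (m + 1) → ℝ) → Matrix (Fin (m + 1)) (Fin (m + 1)) ℝ :=
    fun x => fun i j => (Fin.snoc (fun l : Fin m => W i (c l)) (x i) : Fin (m + 1) → ℝ) j with hMdef
  have hMcol : ∀ x, M x = (M u).updateCol (Fin.last m) x := by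
    intro x
    funext i j
    rcases Fin.eq_castSucc_or_eq_last j with ⟨l, rfl⟩ | rfl
    · rw [Matrix.updateCol_apply]; simp [hMdef, (Fin.castSucc_lt_last l).ne]
    · rw [Matrix.updateCol_apply]; simp [hMdef]
  -- det vanishes on vectors orthogonal to u
  have hdet0 : ∀ v : Fin (m + 1) → ℝ, (∑ j, u j * v j) = 0 → (M v).det = 0 := by
    intro v hv
    by_contra h
    apply hu0
    refine Matrix.eq_zero_of_vecMul_eq_zero h ?_
    funext j
    rcases Fin.eq_castSucc_or_eq_last j with ⟨l, rfl⟩ | rfl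
    · simpa [Matrix.vecMul, dotProduct, hMdef] using horth l
    · simpa [Matrix.vecMul, dotProduct, hMdef] using hv
  -- D ≠ 0
  have hD : (M u).det ≠ 0 := by
    intro h
    obtain ⟨v, hv0, hv⟩ := Matrix.exists_mulVec_eq_zero_iff.mpr h
    have hveq : ∀ i, (∑ l : Fin m, W i (c l) * v (Fin.castSucc l)) + u i * v (Fin.last m) = 0 := by
      intro i
      have := congrFun hv i
      simpa [Matrix.mulVec, dotProduct, hMdef, Fin.sum_univ_castSucc] using this
    have hlast : v (Fin.last m) = 0 := by
      have h1 : ∑ i, u i * ((∑ l : Fin m, W i (c l) * v (Fin.castSucc l)) + u i * v (Fin.last m)) = 0 := by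
        simp [hveq]
      have h2 : ∑ i, u i * ((∑ l : Fin m, W i (c l) * v (Fin.castSucc l)) + u i * v (Fin.last m))
          = (∑ l : Fin m, (∑ i, u i * W i (c l)) * v (Fin.castSucc l))
            + (∑ i, u i ^ 2) * v (Fin.last m) := by
        simp only [mul_add, Finset.sum_add_distrib, Finset.mul_sum, Finset.sum_mul]
        rw [Finset.sum_comm]
        congr 1
        · apply Finset.sum_congr rfl; intros; apply Finset.sum_congr rfl; intros; ring
        · apply Finset.sum_congr rfl; intros; ring
      rw [h2] at h1
      simpa [horth, hu] using h1
    have hcast : ∀ l : Fin m, v (Fin.castSucc l) = 0 := by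
      refine Fintype.linearIndependent_iff.mp hli (fun l => v (Fin.castSucc l)) ?_
      funext i
      have := hveq i
      rw [hlast] at this
      simpa [Finset.sum_apply, mul_comm] using this
    apply hv0
    funext j
    rcases Fin.eq_castSucc_or_eq_last j with ⟨l, rfl⟩ | rfl
    · exact hcast l
    · exact hlast
  -- main determinant identity
  have hkey : ∀ k : Fin n, (M (fun i => W i k)).det = t k * (M u).det := by
    intro k
    have hsplit : (fun i => W i k) = (fun i => W i k - t k * u i) + t k • u := by
      funext i
      show W i k = (W i k - t k * u i) + t k * u i
      ring
    rw [hsplit, hMcol ((fun i => W i k - t k * u i) + t k • u),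
      Matrix.det_updateCol_add, Matrix.det_updateCol_smul,
      ← hMcol (fun i => W i k - t k * u i), ← hMcol u]
    have : (∑ j, u j * (W j k - t k * u j)) = 0 := by
      have h3 : ∑ j, u j * (W j k - t k * u j) = t k - t k * ∑ j, u j ^ 2 := by
        simp only [mul_sub, Finset.sum_sub_distrib, Finset.mul_sum, ht]
        congr 1
        apply Finset.sum_congr rfl; intros; ring
      rw [h3, hu]; ring
    rw [hdet0 _ this]
    simp
  -- connect to submatrices of W
  have hsub : ∀ k : Fin n, t k ≠ 0 → 1 ≤ |t k| * |(M u).det| ∧ |t k| * |(M u).det| ≤ Δ := by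
    intro k hk
    set g : Fin (m + 1) → Fin n := Fin.snoc c k with hg
    have hknotc : ∀ l : Fin m, c l ≠ k := by
      intro l h
      apply hk
      rw [← h]
      exact horth l
    have hginj : Function.Injective g := by
      intro a b hab
      rcases Fin.eq_castSucc_or_eq_last a with ⟨la, rfl⟩ | rfl <;>
        rcases Fin.eq_castSucc_or_eq_last b with ⟨lb, rfl⟩ | rfl
      · rw [hg] at hab; simp at hab
        rw [hc hab]
      · rw [hg] at hab; simp at hab; exact absurd hab (hknotc la)
      · rw [hg] at hab; simp at hab; exact absurd hab.symm (hknotc lb)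
      · rfl
    have hWsub : W.submatrix id g = M (fun i => W i k) := by
      funext i j
      rcases Fin.eq_castSucc_or_eq_last j with ⟨l, rfl⟩ | rfl
      · simp [hg, hMdef]
      · simp [hg, hMdef]
    have hdetne : (W.submatrix id g).det ≠ 0 := by
      rw [hWsub, hkey]
      exact mul_ne_zero hk hD
    have := hmod g hginj hdetne
    rwa [hWsub, hkey, abs_mul] at this
  obtain ⟨k0, hk0⟩ := hex
  have hDpos : 0 < |(M u).det| := abs_pos.mpr hD
  have hΔ1 : 1 ≤ Δ := le_trans (hsub k0 hk0).1 (hsub k0 hk0).2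
  refine ⟨1 / |(M u).det|, Δ / |(M u).det|, by positivity, by positivity, ?_, ?_⟩
  · have hDne : |(M u).det| ≠ 0 := ne_of_gt hDpos
    rw [show Δ / |(M u).det| / (1 / |(M u).det|) = Δ from by field_simp]
  · intro k
    by_cases hk : t k = 0
    · exact Or.inl hk
    · right
      obtain ⟨h1, h2⟩ := hsub k hk
      constructor
      · rw [div_le_iff₀ hDpos]; exact h1
      · rw [le_div_iff₀ hDpos]; exact h2
end

section
/- Let W ∈ ℝ^{d×n} be a normalized matrix, i.e., WWᵀ = I_d and each column w_i satisfies ‖w_i‖₂ ≤ 2√(d/n). Then the zonotope Z = {Wx : ‖x‖_∞ ≤ 1} satisfies (1/2)√(n/d)·B₂^d ⊆ Z ⊆ √n·B₂^d, where B₂^d is the Euclidean unit ball. -/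
/-! Since `W Wᵀ = 1`, every `y` equals `W (Wᵀ y)`, and by Cauchy–Schwarz the coordinates
`⟪w_j, y⟫` of `Wᵀ y` are at most `‖w_j‖ ‖y‖ ≤ 1` once `‖y‖ ≤ ½ √(n/d)`. Conversely `WᵀW` is an
orthogonal projection, so `‖Wx‖ ≤ ‖x‖ ≤ √n` for `‖x‖_∞ ≤ 1`. -/

open Matrix

lemma Real.abs_sum_mul_le_sqrt_mul_sqrt {ι : Type*} (s : Finset ι) (f g : ι → ℝ) :
    |∑ i ∈ s, f i * g i| ≤ √(∑ i ∈ s, f i ^ 2) * √(∑ i ∈ s, g i ^ 2) := by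
  rw [← Real.sqrt_sq_eq_abs, ← Real.sqrt_mul (Finset.sum_nonneg fun _ _ ↦ sq_nonneg _)]
  exact Real.sqrt_le_sqrt (Finset.sum_mul_sq_le_sq_mul_sq s f g)

lemma Real.sqrt_div_mul_sqrt_div_le_one {a b : ℝ} (ha : 0 ≤ a) (hb : 0 ≤ b) :
    √(a / b) * √(b / a) ≤ 1 := by
  rw [← Real.sqrt_mul (div_nonneg ha hb), div_mul_div_comm, mul_comm b a, ← Real.sqrt_one]
  exact Real.sqrt_le_sqrt (div_self_le_one _)

lemma sum_sq_le_card_of_abs_le_one {ι : Type*} [Fintype ι] {x : ι → ℝ} (hx : ∀ i, |x i| ≤ 1) :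
    ∑ i, x i ^ 2 ≤ Fintype.card ι := by
  calc ∑ i, x i ^ 2 ≤ ∑ _i : ι, (1 : ℝ) :=
        Finset.sum_le_sum fun i _ ↦ (sq_le_one_iff_abs_le_one (x i)).2 (hx i)
    _ = Fintype.card ι := by simp

section Coisometry

variable {m n : Type*} [Fintype m] [Fintype n] [DecidableEq m] {W : Matrix m n ℝ}

lemma Matrix.exists_mulVec_eq_of_colNorm_le (hW : W * Wᵀ = 1) {c r : ℝ}
    (hcol : ∀ j, √(∑ i, W i j ^ 2) ≤ c) (hcr : c * r ≤ 1) {y : m → ℝ}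
    (hy : √(∑ i, y i ^ 2) ≤ r) : ∃ x : n → ℝ, (∀ j, |x j| ≤ 1) ∧ y = W *ᵥ x := by
  refine ⟨Wᵀ *ᵥ y, fun j ↦ ?_, by rw [mulVec_mulVec, hW, one_mulVec]⟩
  calc |(Wᵀ *ᵥ y) j| = |∑ i, W i j * y i| := by simp [mulVec, dotProduct]
    _ ≤ √(∑ i, W i j ^ 2) * √(∑ i, y i ^ 2) := Real.abs_sum_mul_le_sqrt_mul_sqrt _ _ _
    _ ≤ c * r := mul_le_mul (hcol j) hy (Real.sqrt_nonneg _) ((Real.sqrt_nonneg _).trans (hcol j))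
    _ ≤ 1 := hcr

lemma Matrix.dotProduct_mulVec_self_le (hW : W * Wᵀ = 1) (x : n → ℝ) :
    W *ᵥ x ⬝ᵥ W *ᵥ x ≤ x ⬝ᵥ x := by
  set u := W *ᵥ x
  set v := Wᵀ *ᵥ u
  have hxv : x ⬝ᵥ v = u ⬝ᵥ u := by rw [dotProduct_mulVec, vecMul_transpose]
  have hvv : v ⬝ᵥ v = u ⬝ᵥ u := by
    rw [dotProduct_mulVec, vecMul_transpose, mulVec_mulVec, hW, one_mulVec]
  have hnonneg : 0 ≤ (x - v) ⬝ᵥ (x - v) :=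
    Finset.sum_nonneg fun i _ ↦ mul_self_nonneg _
  rw [sub_dotProduct, dotProduct_sub, dotProduct_sub, dotProduct_comm v x, hxv, hvv] at hnonneg
  linarith

lemma Matrix.sum_sq_mulVec_le (hW : W * Wᵀ = 1) (x : n → ℝ) :
    ∑ i, (W *ᵥ x) i ^ 2 ≤ ∑ j, x j ^ 2 := by
  simpa only [dotProduct, sq] using W.dotProduct_mulVec_self_le hW x

end Coisometry

theorem stmt3 (d n : ℕ) (W : Matrix (Fin d) (Fin n) ℝ)
    (hW : W * W.transpose = 1)
    (hcol : ∀ j, Real.sqrt (∑ i, (W i j) ^ 2) ≤ 2 * Real.sqrt ((d : ℝ) / n)) :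
    {y : Fin d → ℝ | Real.sqrt (∑ i, y i ^ 2) ≤ (1 / 2) * Real.sqrt ((n : ℝ) / d)} ⊆
      {z : Fin d → ℝ | ∃ x : Fin n → ℝ, (∀ i, |x i| ≤ 1) ∧ z = W.mulVec x} ∧
    {z : Fin d → ℝ | ∃ x : Fin n → ℝ, (∀ i, |x i| ≤ 1) ∧ z = W.mulVec x} ⊆
      {y : Fin d → ℝ | Real.sqrt (∑ i, y i ^ 2) ≤ Real.sqrt n} := by
  have hcr : 2 * √((d : ℝ) / n) * (1 / 2 * √((n : ℝ) / d)) ≤ 1 := by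
    have := Real.sqrt_div_mul_sqrt_div_le_one (Nat.cast_nonneg' d) (Nat.cast_nonneg' n)
    linarith
  refine ⟨fun y hy ↦ W.exists_mulVec_eq_of_colNorm_le hW hcol hcr hy, ?_⟩
  rintro _ ⟨x, hx, rfl⟩
  refine Real.sqrt_le_sqrt ((W.sum_sq_mulVec_le hW x).trans ?_)
  simpa using sum_sq_le_card_of_abs_le_one hx
end

section
/- Suppose for a Δ-modular matrix W ∈ ℝ^{d×n} and ε ∈ (0,1) there exists a nonnegative diagonal matrix D = diag(c_1,…,c_n) with (1−ε)²·WWᵀ ⪯ WDWᵀ ⪯ (1+ε)²·WWᵀ (Löwner order). Let u be a facet normal of Z(W), and let α, β > 0 with β/α ≤ Δ satisfy |w_iᵀu| ∈ {0} ∪ [α, β] for all columns w_i. Then, with W′ = (c_i w_i)_{i : c_i > 0}, one has (1−ε)²·‖Wᵀu‖₁ ≤ Δ·‖(W′)ᵀu‖₁ ≤ Δ²(1+ε)²·‖Wᵀu‖₁. -/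
open Matrix

private lemma quadform (d n : ℕ) (W : Matrix (Fin d) (Fin n) ℝ) (c : Fin n → ℝ)
    (u : Fin d → ℝ) :
    u ⬝ᵥ ((W * Matrix.diagonal c * W.transpose) *ᵥ u) = ∑ i, c i * (∑ j, u j * W j i)^2 := by
  rw [Matrix.mul_assoc, ← mulVec_mulVec, dotProduct_mulVec, ← mulVec_mulVec]
  simp only [vecMul, mulVec, dotProduct, transpose_apply, diagonal_apply, ite_mul, zero_mul,
    Finset.sum_ite_eq, Finset.mem_univ, if_true]
  have h : ∀ i : Fin n, ∑ x, W x i * u x = ∑ j, u j * W j i :=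
    fun i => Finset.sum_congr rfl fun j _ => mul_comm _ _
  refine Finset.sum_congr rfl fun i _ => ?_
  rw [h]; ring

private lemma quadform1 (d n : ℕ) (W : Matrix (Fin d) (Fin n) ℝ) (u : Fin d → ℝ) :
    u ⬝ᵥ ((W * W.transpose) *ᵥ u) = ∑ i, (∑ j, u j * W j i)^2 := by
  have := quadform d n W (fun _ => 1) u
  simpa using this

theorem stmt11 (d n : ℕ) (Δ ε : ℝ) (W : Matrix (Fin d) (Fin n) ℝ)
    (hrank : W.rank = d)
    (hmod : ∀ g : Fin d → Fin n, Function.Injective g →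
      (W.submatrix id g).det ≠ 0 →
      1 ≤ |(W.submatrix id g).det| ∧ |(W.submatrix id g).det| ≤ Δ)
    (hε : ε ∈ Set.Ioo (0 : ℝ) 1)
    (c : Fin n → ℝ) (hc : ∀ i, 0 ≤ c i)
    (hlow : (W * Matrix.diagonal c * W.transpose
      - ((1 - ε) ^ 2) • (W * W.transpose)).PosSemidef)
    (hhigh : (((1 + ε) ^ 2) • (W * W.transpose)
      - W * Matrix.diagonal c * W.transpose).PosSemidef)
    (u : Fin d → ℝ) (hu : u ≠ 0)
    (hfacet : Module.finrank ℝ (Submodule.span ℝ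
      {y : Fin d → ℝ | ∃ i, (∑ j, u j * W j i) = 0 ∧ y = fun k => W k i}) = d - 1)
    (α β : ℝ) (hα : 0 < α) (hβ : 0 < β) (hβα : β / α ≤ Δ)
    (hαβ : ∀ i, (∑ j, u j * W j i) = 0 ∨
      (α ≤ |∑ j, u j * W j i| ∧ |∑ j, u j * W j i| ≤ β)) :
    (1 - ε) ^ 2 * ∑ i, |∑ j, u j * W j i| ≤ Δ * ∑ i, c i * |∑ j, u j * W j i| ∧
    Δ * ∑ i, c i * |∑ j, u j * W j i| ≤ Δ ^ 2 * (1 + ε) ^ 2 * ∑ i, |∑ j, u j * W j i| := by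
  set t : Fin n → ℝ := fun i => ∑ j, u j * W j i with ht
  set S : ℝ := ∑ i, |t i| with hS
  set T : ℝ := ∑ i, c i * |t i| with hT
  set A : ℝ := ∑ i, c i * (t i)^2 with hA
  set B : ℝ := ∑ i, (t i)^2 with hB
  have hβΔα : β ≤ Δ * α := by
    rw [div_le_iff₀ hα] at hβα; linarith
  have hΔ : 0 < Δ := lt_of_lt_of_le (div_pos hβ hα) hβα
  -- quadratic form inequalities
  have h1 : (1 - ε)^2 * B ≤ A := by
    have := hlow.dotProduct_mulVec_nonneg u
    rw [star_trivial, sub_mulVec, dotProduct_sub, smul_mulVec, dotProduct_smul,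
      quadform d n W c u, quadform1 d n W u] at this
    simp only [smul_eq_mul] at this
    linarith
  have h2 : A ≤ (1 + ε)^2 * B := by
    have := hhigh.dotProduct_mulVec_nonneg u
    rw [star_trivial, sub_mulVec, dotProduct_sub, smul_mulVec, dotProduct_smul,
      quadform d n W c u, quadform1 d n W u] at this
    simp only [smul_eq_mul] at this
    linarith
  -- pointwise bounds
  have hsq : ∀ i, α * |t i| ≤ (t i)^2 ∧ (t i)^2 ≤ β * |t i| := by
    intro i
    rcases hαβ i with h0 | ⟨hl, hr⟩
    · rw [show t i = 0 from h0]; norm_num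
    · have habs : (t i)^2 = |t i| * |t i| := by rw [← sq_abs (t i), sq]
      have h0 : 0 ≤ |t i| := abs_nonneg _
      constructor
      · rw [habs]; exact mul_le_mul_of_nonneg_right hl h0
      · rw [habs]; exact mul_le_mul_of_nonneg_right hr h0
  have hBS1 : α * S ≤ B := by
    rw [hS, hB, Finset.mul_sum]
    exact Finset.sum_le_sum fun i _ => (hsq i).1
  have hBS2 : B ≤ β * S := by
    rw [hS, hB, Finset.mul_sum]
    exact Finset.sum_le_sum fun i _ => (hsq i).2
  have hAT1 : α * T ≤ A := by
    rw [hT, hA, Finset.mul_sum]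
    refine Finset.sum_le_sum fun i _ => ?_
    have := mul_le_mul_of_nonneg_left (hsq i).1 (hc i)
    linarith [this]
  have hAT2 : A ≤ β * T := by
    rw [hT, hA, Finset.mul_sum]
    refine Finset.sum_le_sum fun i _ => ?_
    have := mul_le_mul_of_nonneg_left (hsq i).2 (hc i)
    linarith [this]
  have hS0 : 0 ≤ S := Finset.sum_nonneg fun i _ => abs_nonneg _
  have hT0 : 0 ≤ T := Finset.sum_nonneg fun i _ => mul_nonneg (hc i) (abs_nonneg _)
  obtain ⟨hε0, hε1⟩ := hε
  constructor
  · -- (1-ε)² S ≤ Δ T : multiply by α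
    rw [← mul_le_mul_iff_right₀ hα]
    calc α * ((1 - ε)^2 * S) = (1 - ε)^2 * (α * S) := by ring
      _ ≤ (1 - ε)^2 * B := by
          exact mul_le_mul_of_nonneg_left hBS1 (by positivity)
      _ ≤ A := h1
      _ ≤ β * T := hAT2
      _ ≤ (Δ * α) * T := mul_le_mul_of_nonneg_right hβΔα hT0
      _ = α * (Δ * T) := by ring
  · rw [← mul_le_mul_iff_right₀ hα]
    calc α * (Δ * T) = Δ * (α * T) := by ring
      _ ≤ Δ * A := mul_le_mul_of_nonneg_left hAT1 hΔ.le
      _ ≤ Δ * ((1 + ε)^2 * B) := mul_le_mul_of_nonneg_left h2 hΔ.le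
      _ ≤ Δ * ((1 + ε)^2 * (β * S)) := by
          refine mul_le_mul_of_nonneg_left ?_ hΔ.le
          exact mul_le_mul_of_nonneg_left hBS2 (by positivity)
      _ ≤ Δ * ((1 + ε)^2 * ((Δ * α) * S)) := by
          refine mul_le_mul_of_nonneg_left ?_ hΔ.le
          refine mul_le_mul_of_nonneg_left ?_ (by positivity)
          exact mul_le_mul_of_nonneg_right hβΔα hS0
      _ = α * (Δ^2 * (1 + ε)^2 * S) := by ring
end
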